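/- Every compact subset of a topological exponential vector space X over K is bounded. -/

import Mathlib

open Pointwise

/-- An exponential vector space (evs) over `K` (`K = ℝ` or `ℂ`, captured by `RCLike`):
a partially ordered commutative monoid with a scalar multiplication satisfying the evs axioms.
The additive identity `θ` is denoted `0`. -/
class ExpVectorSpace (K : Type*) (X : Type*) [RCLike K] extends
    AddCommMonoid X, PartialOrder X, SMul K X where
  /-- A2 (addition is monotone) -/
  add_le_add_right' : ∀ {x y : X}, x ≤ y → ∀ z : X, x + z ≤ y + z
  /-- A2 (scalar multiplication is monotone) -/
  smul_le_smul' : ∀ {x y : X}, x ≤ y → ∀ α : K, α • x ≤ α • y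
  /-- A3(i) -/
  smul_add' : ∀ (α : K) (x y : X), α • (x + y) = α • x + α • y
  /-- A3(ii) -/
  mul_smul' : ∀ (α β : K) (x : X), α • (β • x) = (α * β) • x
  /-- A3(iii) -/
  add_smul_le' : ∀ (α β : K) (x : X), (α + β) • x ≤ α • x + β • x
  /-- A3(iv) -/
  one_smul' : ∀ x : X, (1 : K) • x = x
  /-- A4 -/
  smul_eq_zero_iff' : ∀ (α : K) (x : X), α • x = 0 ↔ α = 0 ∨ x = 0
  /-- A5 : `x + (-1)x = θ` iff `x` is a minimal element (i.e. `x ∈ X₀`). -/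
  add_neg_one_smul_eq_zero_iff' : ∀ x : X, x + (-1 : K) • x = 0 ↔ IsMin x
  /-- A6 -/
  exists_isMin_le' : ∀ x : X, ∃ p : X, IsMin p ∧ p ≤ x

/-- A set `A` in an evs is absorbing if for every `x` there is `α > 0` such that
`μ • x ∈ A` for all scalars `μ` with `‖μ‖ ≤ α`. -/
def EvsAbsorbing (K : Type*) {X : Type*} [RCLike K] [ExpVectorSpace K X] (A : Set X) : Prop :=
  ∀ x : X, ∃ α : ℝ, 0 < α ∧ ∀ μ : K, ‖μ‖ ≤ α → μ • x ∈ A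

/-- A set `A` in an evs is balanced if `α • A ⊆ A` whenever `‖α‖ ≤ 1`. -/
def EvsBalanced (K : Type*) {X : Type*} [RCLike K] [ExpVectorSpace K X] (A : Set X) : Prop :=
  ∀ α : K, ‖α‖ ≤ 1 → ∀ x ∈ A, α • x ∈ A

/-- The up-set `↑A = {x : a ≤ x for some a ∈ A}`. -/
def upSet {X : Type*} [Preorder X] (A : Set X) : Set X := {x | ∃ a ∈ A, a ≤ x}

/-- The down-set `↓A = {x : x ≤ a for some a ∈ A}`. -/
def downSet {X : Type*} [Preorder X] (A : Set X) : Set X := {x | ∃ a ∈ A, x ≤ a}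

/-- A topological evs: an evs with a topology making addition and scalar multiplication
continuous and the partial order closed. -/
class TopExpVectorSpace (K : Type*) (X : Type*) [RCLike K] [TopologicalSpace X] extends
    ExpVectorSpace K X where
  continuous_add' : Continuous fun p : X × X => p.1 + p.2
  continuous_smul' : Continuous fun p : K × X => p.1 • p.2
  isClosed_le' : IsClosed {p : X × X | p.1 ≤ p.2}

/-- A set `A` in a topological evs is bounded if for every neighbourhood `V` of `θ`
there is `α > 0` with `μ • A ⊆ V` for all `‖μ‖ ≤ α`. -/
def EvsBounded (K : Type*) {X : Type*} [RCLike K] [TopologicalSpace X]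
    [TopExpVectorSpace K X] (A : Set X) : Prop :=
  ∀ V ∈ nhds (0 : X), ∃ α : ℝ, 0 < α ∧ ∀ μ : K, ‖μ‖ ≤ α → (μ • A : Set X) ⊆ V

/- Scalar multiplication is jointly continuous and `0 • x = θ`, so each point of `A` has a
neighbourhood sent into `V` by all small scalars; the tube lemma over the compact set `A`
makes the bound on the scalars uniform. -/

theorem ExpVectorSpace.zero_smul {K X : Type*} [RCLike K] [ExpVectorSpace K X] (x : X) :
    (0 : K) • x = 0 :=
  (ExpVectorSpace.smul_eq_zero_iff' 0 x).2 (Or.inl rfl)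

namespace TopExpVectorSpace

variable {K X : Type*} [RCLike K] [TopologicalSpace X] [TopExpVectorSpace K X]

theorem eventually_forall_smul_mem_of_isCompact {A V : Set X} (hA : IsCompact A)
    (hV : V ∈ nhds (0 : X)) : ∀ᶠ μ in nhds (0 : K), ∀ a ∈ A, μ • a ∈ V :=
  hA.eventually_forall_of_forall_eventually fun x _ =>
    (continuous_smul' (K := K)).continuousAt.preimage_mem_nhds
      (by rwa [ExpVectorSpace.zero_smul x])

end TopExpVectorSpace

/-- every compact subset of a topological evs is bounded. -/
theorem stmt15 {K X : Type*} [RCLike K] [TopologicalSpace X] [TopExpVectorSpace K X]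
    {A : Set X} (hA : IsCompact A) : EvsBounded K A := by
  intro V hV
  obtain ⟨α, hα, hsmul⟩ := Metric.nhds_basis_closedBall.eventually_iff.1
    (TopExpVectorSpace.eventually_forall_smul_mem_of_isCompact (K := K) hA hV)
  refine ⟨α, hα, fun μ hμ => ?_⟩
  rintro _ ⟨a, ha, rfl⟩
  exact hsmul (mem_closedBall_zero_iff.2 hμ) a ha
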